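/- The function Q is strictly concave on its domain D (which is an interval): for all x₁, x₂ ∈ D with x₁ ≠ x₂ and all t ∈ (0,1), Q(t·x₁ + (1−t)·x₂) > t·Q(x₁) + (1−t)·Q(x₂). -/

import Mathlib

noncomputable def gpdf (t : ℝ) : ℝ := Real.exp (-t ^ 2 / 2) / Real.sqrt (2 * Real.pi)

noncomputable def gcdf (x : ℝ) : ℝ := ∫ t in Set.Iic x, gpdf t

noncomputable def gquant : ℝ → ℝ := Function.invFun gcdf

noncomputable def sHat (η σ : ℝ) : ℝ := Real.sqrt (η ^ 2 + σ ^ 2)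

noncomputable def sTil (η σ : ℝ) : ℝ := η ^ 2 / sHat η σ

def Dset (pA α : ℝ) : Set ℝ :=
  {x | x ∈ Set.Ioo (0:ℝ) 1 ∧ (α - pA * x) / (1 - pA) ∈ Set.Ioo (0:ℝ) 1}

noncomputable def Qfun (pA α μA μB sA sB x : ℝ) : ℝ :=
  (1 / α) * (pA * (μA * x + sA * gpdf (gquant (1 - x)))
    + (1 - pA) * (μB * ((α - pA * x) / (1 - pA))
      + sB * gpdf (gquant (1 - (α - pA * x) / (1 - pA)))))

noncomputable def clampTo (lo hi x : ℝ) : ℝ := min hi (max lo x)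

/-
Since `φ' t = -t φ t` and `(Φ⁻¹)' = 1 / φ ∘ Φ⁻¹`, the map `q ↦ φ (Φ⁻¹ q)` has derivative
`-Φ⁻¹ q` on `(0, 1)`, which is strictly decreasing; so this map is strictly concave. On `D`, `Q` is
an affine function of `x` plus a positive multiple of this map composed with `x ↦ 1 - x` and a
nonnegative multiple of it composed with the injective affine map `x ↦ 1 - y`, hence strictly
concave.
-/

open MeasureTheory Real Set Filter Topology

lemma gpdf_pos (t : ℝ) : 0 < gpdf t := by
  unfold gpdf
  positivity

lemma continuous_gpdf : Continuous gpdf := by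
  unfold gpdf
  fun_prop

lemma gpdf_eq_mul_exp (t : ℝ) : gpdf t = (√(2 * π))⁻¹ * rexp (-(1 / 2) * t ^ 2) := by
  rw [gpdf, div_eq_inv_mul]
  ring_nf

lemma integrable_gpdf : Integrable gpdf := by
  simpa only [← gpdf_eq_mul_exp] using
    (integrable_exp_neg_mul_sq (by norm_num : (0 : ℝ) < 1 / 2)).const_mul (√(2 * π))⁻¹

lemma integral_gpdf : ∫ t, gpdf t = 1 := by
  simp_rw [gpdf_eq_mul_exp]
  rw [integral_const_mul, integral_gaussian, show π / (1 / 2) = 2 * π by ring]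
  exact inv_mul_cancel₀ (by positivity)

lemma hasDerivAt_gpdf (t : ℝ) : HasDerivAt gpdf (-t * gpdf t) t := by
  have h : HasDerivAt (fun t : ℝ => -t ^ 2 / 2) (-t) t :=
    ((hasDerivAt_pow 2 t).neg.div_const 2).congr_deriv (by ring)
  exact (h.exp.div_const (√(2 * π))).congr_deriv (by unfold gpdf; ring)

lemma gcdf_eq_add_intervalIntegral (x : ℝ) : gcdf x = gcdf 0 + ∫ t in (0 : ℝ)..x, gpdf t := by
  rw [gcdf, gcdf, ← intervalIntegral.integral_Iic_sub_Iic integrable_gpdf.integrableOn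
    integrable_gpdf.integrableOn]
  ring

lemma gcdf_add_integral_Ioi (x : ℝ) : gcdf x + ∫ t in Ioi x, gpdf t = 1 := by
  rw [gcdf, intervalIntegral.integral_Iic_add_Ioi integrable_gpdf.integrableOn
    integrable_gpdf.integrableOn, integral_gpdf]

lemma hasDerivAt_gcdf (x : ℝ) : HasDerivAt gcdf (gpdf x) x := by
  have h : HasDerivAt (fun u => ∫ t in (0 : ℝ)..u, gpdf t) (gpdf x) x :=
    intervalIntegral.integral_hasDerivAt_right integrable_gpdf.intervalIntegrable
      (continuous_gpdf.stronglyMeasurableAtFilter _ _) continuous_gpdf.continuousAt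
  simpa only [← gcdf_eq_add_intervalIntegral] using h.const_add (gcdf 0)

lemma continuous_gcdf : Continuous gcdf :=
  continuous_iff_continuousAt.2 fun x => (hasDerivAt_gcdf x).continuousAt

lemma gcdf_strictMono : StrictMono gcdf :=
  strictMono_of_hasDerivAt_pos hasDerivAt_gcdf gpdf_pos

lemma tendsto_gcdf_atTop : Tendsto gcdf atTop (𝓝 1) := by
  have h := (aecover_Iic (μ := volume) tendsto_id).integral_tendsto_of_countably_generated
    integrable_gpdf
  rwa [integral_gpdf] at h

lemma tendsto_gcdf_atBot : Tendsto gcdf atBot (𝓝 0) := by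
  have h := (aecover_Ioi (μ := volume) tendsto_id).integral_tendsto_of_countably_generated
    integrable_gpdf
  rw [integral_gpdf] at h
  have hΦ : gcdf = fun x => 1 - ∫ t in Ioi x, gpdf t := by
    funext x
    rw [← gcdf_add_integral_Ioi x, add_sub_cancel_right]
  simpa only [hΦ, sub_self, id] using (tendsto_const_nhds (x := (1 : ℝ))).sub h

lemma gcdf_mem_Ioo (x : ℝ) : gcdf x ∈ Ioo (0 : ℝ) 1 :=
  ⟨(gcdf_strictMono.monotone.le_of_tendsto tendsto_gcdf_atBot (x - 1)).trans_lt
      (gcdf_strictMono (by linarith)),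
    (gcdf_strictMono (by linarith)).trans_le
      (gcdf_strictMono.monotone.ge_of_tendsto tendsto_gcdf_atTop (x + 1))⟩

lemma gcdf_gquant {p : ℝ} (hp : p ∈ Ioo (0 : ℝ) 1) : gcdf (gquant p) = p := by
  refine Function.invFun_eq (mem_range_of_exists_le_of_exists_ge continuous_gcdf ?_ ?_)
  · exact (tendsto_gcdf_atBot.eventually (eventually_le_nhds hp.1)).exists
  · exact (tendsto_gcdf_atTop.eventually (eventually_ge_nhds hp.2)).exists

lemma gquant_gcdf (x : ℝ) : gquant (gcdf x) = x :=
  Function.leftInverse_invFun gcdf_strictMono.injective x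

lemma strictMonoOn_gquant : StrictMonoOn gquant (Ioo (0 : ℝ) 1) := fun p hp q hq hpq =>
  gcdf_strictMono.lt_iff_lt.1 (by rwa [gcdf_gquant hp, gcdf_gquant hq])

lemma continuousAt_gquant {p : ℝ} (hp : p ∈ Ioo (0 : ℝ) 1) : ContinuousAt gquant p := by
  refine continuousAt_of_monotoneOn_of_image_mem_nhds strictMonoOn_gquant.monotoneOn
    (isOpen_Ioo.mem_nhds hp) (Filter.mem_of_superset univ_mem fun x _ => ?_)
  exact ⟨gcdf x, gcdf_mem_Ioo x, gquant_gcdf x⟩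

lemma hasDerivAt_gquant {p : ℝ} (hp : p ∈ Ioo (0 : ℝ) 1) :
    HasDerivAt gquant (gpdf (gquant p))⁻¹ p :=
  (hasDerivAt_gcdf (gquant p)).of_local_left_inverse (continuousAt_gquant hp)
    (gpdf_pos _).ne' (eventually_of_mem (isOpen_Ioo.mem_nhds hp) fun _ => gcdf_gquant)

lemma hasDerivAt_gpdf_gquant {p : ℝ} (hp : p ∈ Ioo (0 : ℝ) 1) :
    HasDerivAt (fun q => gpdf (gquant q)) (-gquant p) p :=
  ((hasDerivAt_gpdf (gquant p)).comp p (hasDerivAt_gquant hp)).congr_deriv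
    (by field_simp [(gpdf_pos (gquant p)).ne'])

lemma strictConcaveOn_gpdf_gquant :
    StrictConcaveOn ℝ (Ioo (0 : ℝ) 1) fun q => gpdf (gquant q) := by
  refine StrictAntiOn.strictConcaveOn_of_deriv (convex_Ioo 0 1)
    (fun p hp => (hasDerivAt_gpdf_gquant hp).continuousAt.continuousWithinAt) ?_
  rw [interior_Ioo]
  intro p hp q hq hpq
  rw [(hasDerivAt_gpdf_gquant hp).deriv, (hasDerivAt_gpdf_gquant hq).deriv]
  exact neg_lt_neg (strictMonoOn_gquant hp hq hpq)

theorem StrictConcaveOn.const_mul {E : Type*} [AddCommGroup E] [Module ℝ E] {s : Set E}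
    {f : E → ℝ} (hf : StrictConcaveOn ℝ s f) {c : ℝ} (hc : 0 < c) :
    StrictConcaveOn ℝ s fun x => c * f x := by
  refine ⟨hf.1, fun x hx y hy hxy a b ha hb hab => ?_⟩
  have := mul_lt_mul_of_pos_left (hf.2 hx hy hxy ha hb hab) hc
  simp only [smul_eq_mul] at this ⊢
  linarith

theorem StrictConcaveOn.comp_mul_add {s : Set ℝ} {f : ℝ → ℝ} (hf : StrictConcaveOn ℝ s f)
    {a : ℝ} (ha : a ≠ 0) (b : ℝ) :
    StrictConcaveOn ℝ ((fun x => a * x + b) ⁻¹' s) fun x => f (a * x + b) := by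
  refine ⟨fun x hx y hy u v hu hv huv => ?_, fun x hx y hy hxy u v hu hv huv => ?_⟩
  · simpa only [mem_preimage, smul_eq_mul, show a * (u * x + v * y) + b
      = u * (a * x + b) + v * (a * y + b) by linear_combination (-b) * huv]
      using hf.1 hx hy hu hv huv
  · have hne : a * x + b ≠ a * y + b := fun h => hxy (mul_left_cancel₀ ha (add_right_cancel h))
    simpa only [smul_eq_mul, show a * (u * x + v * y) + b
      = u * (a * x + b) + v * (a * y + b) by linear_combination (-b) * huv]
      using hf.2 hx hy hne hu hv huv

lemma convex_Dset (pA α : ℝ) : Convex ℝ (Dset pA α) := by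
  intro x hx y hy u v hu hv huv
  refine ⟨convex_Ioo 0 1 hx.1 hy.1 hu hv huv, ?_⟩
  have h : (α - pA * (u • x + v • y)) / (1 - pA)
      = u • ((α - pA * x) / (1 - pA)) + v • ((α - pA * y) / (1 - pA)) := by
    simp only [smul_eq_mul]
    linear_combination (-α / (1 - pA)) * huv
  rw [h]
  exact convex_Ioo 0 1 hx.2 hy.2 hu hv huv

lemma strictConcaveOn_Qfun {pA α : ℝ} (hpA : pA ∈ Ioo (0 : ℝ) 1) (hα : 0 < α) (μA μB : ℝ)
    {sA sB : ℝ} (hsA : 0 < sA) (hsB : 0 ≤ sB) :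
    StrictConcaveOn ℝ (Dset pA α) (Qfun pA α μA μB sA sB) := by
  have hpA' : 1 - pA ≠ 0 := by linarith [hpA.2]
  have hy : ∀ x, pA / (1 - pA) * x + (1 - α / (1 - pA)) = 1 - (α - pA * x) / (1 - pA) :=
    fun x => by ring
  have hF : StrictConcaveOn ℝ (Dset pA α) fun x => gpdf (gquant (1 - x)) := by
    refine ((strictConcaveOn_gpdf_gquant.comp_mul_add (a := -1) (by norm_num) 1).subset
      (fun x hx => ?_) (convex_Dset pA α)).congr fun x _ => by
        simp only [neg_one_mul, neg_add_eq_sub]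
    simp only [mem_preimage, neg_one_mul, neg_add_eq_sub, mem_Ioo]
    constructor <;> linarith [hx.1.1, hx.1.2]
  have hG : StrictConcaveOn ℝ (Dset pA α)
      fun x => gpdf (gquant (1 - (α - pA * x) / (1 - pA))) := by
    refine ((strictConcaveOn_gpdf_gquant.comp_mul_add (div_ne_zero hpA.1.ne' hpA')
      (1 - α / (1 - pA))).subset (fun x hx => ?_) (convex_Dset pA α)).congr fun x _ => by
        simp only [hy]
    simp only [mem_preimage, hy, mem_Ioo]
    constructor <;> linarith [hx.2.1, hx.2.2]
  have hL : ConcaveOn ℝ (Dset pA α) fun x => (pA * (μA - μB)) * x + μB * α :=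
    ((LinearMap.mulLeft ℝ (pA * (μA - μB))).concaveOn (convex_Dset pA α)).add_const (μB * α)
  refine (((hF.const_mul (mul_pos hpA.1 hsA)).add_concaveOn
    ((hG.concaveOn.smul (mul_nonneg (sub_nonneg.2 hpA.2.le) hsB)).add hL)).const_mul
    (one_div_pos.2 hα)).congr fun x _ => ?_
  simp only [Pi.add_apply, smul_eq_mul, Qfun]
  field_simp
  ring

lemma sTil_pos {η : ℝ} (hη : 0 < η) (σ : ℝ) : 0 < sTil η σ := by
  unfold sTil sHat
  positivity

lemma sTil_nonneg (η σ : ℝ) : 0 ≤ sTil η σ := by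
  unfold sTil sHat
  positivity

theorem stmt4_general (pA α μA μB ηA ηB σA σB : ℝ)
    (hpA : pA ∈ Set.Ioo (0:ℝ) 1) (hα : α ∈ Set.Ioo (0:ℝ) 1)
    (hηA : 0 < ηA) :
    Convex ℝ (Dset pA α)
    ∧ ∀ x₁ ∈ Dset pA α, ∀ x₂ ∈ Dset pA α, x₁ ≠ x₂ → ∀ t ∈ Set.Ioo (0:ℝ) 1,
        t * Qfun pA α μA μB (sTil ηA σA) (sTil ηB σB) x₁
          + (1 - t) * Qfun pA α μA μB (sTil ηA σA) (sTil ηB σB) x₂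
        < Qfun pA α μA μB (sTil ηA σA) (sTil ηB σB) (t * x₁ + (1 - t) * x₂) := by
  refine ⟨convex_Dset pA α, fun x₁ hx₁ x₂ hx₂ hne t ht => ?_⟩
  have hQ := strictConcaveOn_Qfun hpA hα.1 μA μB (sTil_pos hηA σA) (sTil_nonneg ηB σB)
  simpa only [smul_eq_mul] using hQ.2 hx₁ hx₂ hne ht.1 (sub_pos.2 ht.2) (add_sub_cancel t 1)

/-- the utility `Q` is strictly concave on its (convex) domain `D`. -/
theorem stmt4 (pA α μA μB ηA ηB σA σB : ℝ)
    (hpA : pA ∈ Set.Ioo (0:ℝ) 1) (hα : α ∈ Set.Ioo (0:ℝ) 1)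
    (hηA : 0 < ηA) (hηB : 0 < ηB) (hσA : 0 < σA) (hσB : 0 < σB) :
    Convex ℝ (Dset pA α)
    ∧ ∀ x₁ ∈ Dset pA α, ∀ x₂ ∈ Dset pA α, x₁ ≠ x₂ → ∀ t ∈ Set.Ioo (0:ℝ) 1,
        t * Qfun pA α μA μB (sTil ηA σA) (sTil ηB σB) x₁
          + (1 - t) * Qfun pA α μA μB (sTil ηA σA) (sTil ηB σB) x₂
        < Qfun pA α μA μB (sTil ηA σA) (sTil ηB σB) (t * x₁ + (1 - t) * x₂) :=
  stmt4_general pA α μA μB ηA ηB σA σB hpA hα hηA
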